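/- There exist r > 0 and C > 0 (depending on n, s₀, T and the coefficients a^{jk}) such that for every λ ≥ 1, every t ∈ [0,T] and every x with 0 < |x| ≤ r one has |Ψ(t,x)| ≤ C·λ·w(x,t)^{−2}. -/

import Mathlib

open Set

/- The radial weight profile: `F s = ∫₀^s (e^{-u} - 1)/u du` (integrand extended
continuously by `-1` at `u = 0`), and `φ s = s · exp (F s)`. -/

noncomputable def Fwt (s : ℝ) : ℝ :=
  ∫ u in (0:ℝ)..s, if u = 0 then (-1 : ℝ) else (Real.exp (-u) - 1) / u

noncomputable def phiw (s : ℝ) : ℝ := s * Real.exp (Fwt s)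

/-- `σ(x,t)`: the distance from `x` to the origin in the metric `(a^{jk}(t,0))`. -/
noncomputable def sigw {n : ℕ} (a : Fin n → Fin n → ℝ → EuclideanSpace ℝ (Fin n) → ℝ)
    (x : EuclideanSpace ℝ (Fin n)) (t : ℝ) : ℝ :=
  Real.sqrt (∑ j, ∑ k, a j k t 0 * x j * x k)

/-- The Carleman weight `w(x,t) = φ(σ(x,t))`. -/
noncomputable def ww {n : ℕ} (a : Fin n → Fin n → ℝ → EuclideanSpace ℝ (Fin n) → ℝ)
    (x : EuclideanSpace ℝ (Fin n)) (t : ℝ) : ℝ :=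
  phiw (sigw a x t)

/-- Partial derivative in the `i`-th coordinate direction. -/
noncomputable def pd {n : ℕ} (f : EuclideanSpace ℝ (Fin n) → ℝ) (i : Fin n)
    (x : EuclideanSpace ℝ (Fin n)) : ℝ :=
  fderiv ℝ f x (EuclideanSpace.single i 1)

/-- `ℓ(t,x) = -λ ln w(x,t)`. -/
noncomputable def lw {n : ℕ} (a : Fin n → Fin n → ℝ → EuclideanSpace ℝ (Fin n) → ℝ)
    (lam t : ℝ) (x : EuclideanSpace ℝ (Fin n)) : ℝ :=
  -lam * Real.log (ww a x t)

/-- `Ψ = 2 Σ_{j,k} (a^{jk} ℓ_{x_j})_{x_k}`. -/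
noncomputable def Psiw {n : ℕ} (a : Fin n → Fin n → ℝ → EuclideanSpace ℝ (Fin n) → ℝ)
    (lam t : ℝ) (x : EuclideanSpace ℝ (Fin n)) : ℝ :=
  2 * ∑ j, ∑ k, pd (fun y => a j k t y * pd (lw a lam t) j y) k x

/-- `𝒜 = -Σ_{j,k} [a^{jk} ℓ_{x_j} ℓ_{x_k} + (a^{jk} ℓ_{x_j})_{x_k}] - ℓ_t`. -/
noncomputable def Aw {n : ℕ} (a : Fin n → Fin n → ℝ → EuclideanSpace ℝ (Fin n) → ℝ)
    (lam t : ℝ) (x : EuclideanSpace ℝ (Fin n)) : ℝ :=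
  -(∑ j, ∑ k, (a j k t x * pd (lw a lam t) j x * pd (lw a lam t) k x
      + pd (fun y => a j k t y * pd (lw a lam t) j y) k x))
    - deriv (fun s => lw a lam s x) t

/-- `c^{jk} = Σ_{j',k'}[2 a^{jk'}(a^{j'k} ℓ_{x_{j'}})_{x_{k'}} - (a^{jk} a^{j'k'} ℓ_{x_{j'}})_{x_{k'}}]
  - (1/2) ∂ₜ a^{jk} + Ψ a^{jk}`. -/
noncomputable def cw {n : ℕ} (a : Fin n → Fin n → ℝ → EuclideanSpace ℝ (Fin n) → ℝ)
    (lam t : ℝ) (j k : Fin n) (x : EuclideanSpace ℝ (Fin n)) : ℝ :=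
  (∑ j', ∑ k', (2 * a j k' t x * pd (fun y => a j' k t y * pd (lw a lam t) j' y) k' x
      - pd (fun y => a j k t y * a j' k' t y * pd (lw a lam t) j' y) k' x))
    - deriv (fun s => a j k s x) t / 2 + Psiw a lam t x * a j k t x

/-- `ℬ = 2[𝒜 Ψ - Σ_{j,k} (𝒜 a^{jk} ℓ_{x_j})_{x_k}] - ∂ₜ 𝒜 - Σ_{j,k} (a^{jk} Ψ_{x_k})_{x_j}`. -/
noncomputable def Bw {n : ℕ} (a : Fin n → Fin n → ℝ → EuclideanSpace ℝ (Fin n) → ℝ)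
    (lam t : ℝ) (x : EuclideanSpace ℝ (Fin n)) : ℝ :=
  2 * (Aw a lam t x * Psiw a lam t x
      - ∑ j, ∑ k, pd (fun y => Aw a lam t y * a j k t y * pd (lw a lam t) j y) k x)
    - deriv (fun s => Aw a lam s x) t
    - ∑ j, ∑ k, pd (fun y => a j k t y * pd (Psiw a lam t) k y) j x

/-- The spatial Laplacian. -/
noncomputable def lapl {n : ℕ} (f : EuclideanSpace ℝ (Fin n) → ℝ)
    (x : EuclideanSpace ℝ (Fin n)) : ℝ :=
  ∑ i, fderiv ℝ (fun y => fderiv ℝ f y (EuclideanSpace.single i 1)) x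
    (EuclideanSpace.single i 1)

/-
Write `Q(x) = B(x, x)` for the quadratic form of `(a^{jk}(t,0))`, so that `σ = √Q`. Since
`F'(s) = (e^{-s} - 1)/s`, one has `(log φ)'(s) = e^{-s}/s`, hence
`∇ log w = e^{-√Q}/(2Q) · ∇Q`. The factor `e^{-√Q}/(2Q)` is bounded by `1/(2Q)` and its
`Q`-derivative by `1/(2Q²)`, so coercivity `Q ≥ s₀|x|²` and `|∇Q| ≤ 2‖B‖|x|` give
`|∇ℓ| ≲ λ/|x|` and `|∇²ℓ| ≲ λ/|x|²`. With `C¹` bounds for `a^{jk}` on the compact set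
`[0,T] × B̄(0,1)` the product rule yields `|Ψ| ≲ λ/|x|²`. Finally `F ≤ 0` gives `φ(s) ≤ s`,
so `w² ≤ Q ≤ ‖B‖ |x|²`.
-/

open Real Filter Topology

lemma fwtIntegrand_eq_dslope :
    (fun u : ℝ => if u = 0 then (-1 : ℝ) else (exp (-u) - 1) / u)
      = dslope (fun u => exp (-u)) 0 := by
  ext u
  rcases eq_or_ne u 0 with rfl | hu
  · rw [dslope_same, ((hasDerivAt_neg (0:ℝ)).exp).deriv]
    simp
  · simp [hu, dslope_of_ne _ hu, slope_def_field]

lemma continuous_fwtIntegrand :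
    Continuous fun u : ℝ => if u = 0 then (-1 : ℝ) else (exp (-u) - 1) / u := by
  have hdiff : Differentiable ℝ fun u : ℝ => exp (-u) := by fun_prop
  rw [fwtIntegrand_eq_dslope, continuous_iff_continuousAt]
  intro u
  rcases eq_or_ne u 0 with rfl | hu
  · exact continuousAt_dslope_same.2 (hdiff 0)
  · exact (continuousAt_dslope_of_ne hu).2 (hdiff u).continuousAt

lemma hasDerivAt_Fwt (s : ℝ) :
    HasDerivAt Fwt (if s = 0 then (-1 : ℝ) else (exp (-s) - 1) / s) s :=
  (continuous_fwtIntegrand.integral_hasStrictDerivAt 0 s).hasDerivAt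

lemma Fwt_nonpos {s : ℝ} (hs : 0 ≤ s) : Fwt s ≤ 0 := by
  have hint := continuous_fwtIntegrand.intervalIntegrable (μ := MeasureTheory.volume) 0 s
  have := intervalIntegral.integral_mono_on hs hint intervalIntegrable_const
    (g := fun _ => (0 : ℝ)) fun u hu => by
      rcases eq_or_ne u 0 with rfl | hu0
      · simp
      · have : exp (-u) ≤ 1 := exp_le_one_iff.2 (by linarith [hu.1])
        simpa [hu0] using div_nonpos_of_nonpos_of_nonneg (by linarith) hu.1
  simpa [Fwt] using this

lemma phiw_le_self {s : ℝ} (hs : 0 ≤ s) : phiw s ≤ s :=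
  mul_le_of_le_one_right hs (exp_le_one_iff.2 (Fwt_nonpos hs))

lemma hasDerivAt_log_phiw {s : ℝ} (hs : 0 < s) :
    HasDerivAt (fun s => log (phiw s)) (exp (-s) / s) s := by
  have hsum := ((hasDerivAt_log hs.ne').add (hasDerivAt_Fwt s)).congr_deriv (by
    rw [if_neg hs.ne']
    field_simp
    ring : s⁻¹ + _ = exp (-s) / s)
  refine hsum.congr_of_eventuallyEq ?_
  filter_upwards [Ioi_mem_nhds hs] with u hu
  rw [phiw, log_mul (ne_of_gt hu) (exp_ne_zero _), log_exp, Pi.add_apply]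

lemma hasDerivAt_log_phiw_sqrt {q : ℝ} (hq : 0 < q) :
    HasDerivAt (fun q => log (phiw √q)) (exp (-√q) / (2 * q)) q := by
  have hsq : 0 < √q := sqrt_pos.2 hq
  refine ((hasDerivAt_log_phiw hsq).comp q (hasDerivAt_sqrt hq.ne')).congr_deriv ?_
  rw [div_mul_div_comm, mul_one, mul_left_comm, mul_self_sqrt hq.le]

noncomputable def radialFactor (q : ℝ) : ℝ := exp (-√q) / (2 * q)

lemma abs_radialFactor_le {q : ℝ} (hq : 0 < q) : |radialFactor q| ≤ 1 / (2 * q) := by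
  rw [radialFactor, abs_of_nonneg (by positivity)]
  gcongr
  exact exp_le_one_iff.2 (neg_nonpos.2 (sqrt_nonneg q))

lemma exists_hasDerivAt_radialFactor {q : ℝ} (hq : 0 < q) :
    ∃ d, HasDerivAt radialFactor d q ∧ |d| ≤ 1 / (2 * q ^ 2) := by
  have hsq : 0 < √q := sqrt_pos.2 hq
  have hnum : HasDerivAt (fun q => exp (-√q)) (exp (-√q) * -(1 / (2 * √q))) q :=
    (hasDerivAt_sqrt hq.ne').neg.exp
  have hden : HasDerivAt (fun q => 2 * q) 2 q := by simpa using (hasDerivAt_id q).const_mul 2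
  refine ⟨_, hnum.div hden (by positivity), ?_⟩
  -- `√q + 2 ≤ 2 e^{√q}` bounds the numerator by `2`
  have hexp : exp (-√q) * (√q + 2) ≤ 2 := by
    rw [exp_neg, inv_mul_le_iff₀ (exp_pos _)]
    linarith [add_one_le_exp √q, one_le_exp hsq.le]
  have hd : exp (-√q) * -(1 / (2 * √q)) * (2 * q) - exp (-√q) * 2
      = -(exp (-√q) * (√q + 2)) := by
    field_simp
    linear_combination sq_sqrt hq.le
  rw [hd, abs_div, abs_neg, abs_of_nonneg (by positivity), abs_of_nonneg (by positivity),
    div_le_div_iff₀ (by positivity) (by positivity)]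
  nlinarith [sq_nonneg q]

section BilinearForm

variable {E : Type*} [NormedAddCommGroup E] [NormedSpace ℝ E] (B : E →L[ℝ] E →L[ℝ] ℝ)

lemma hasFDerivAt_apply_self (y : E) : HasFDerivAt (fun z => B z z) ((B + B.flip) y) y := by
  refine (B.hasFDerivAt_of_bilinear (hasFDerivAt_id y) (hasFDerivAt_id y)).congr_fderiv ?_
  ext v
  simp

lemma norm_add_flip_le : ‖B + B.flip‖ ≤ 2 * ‖B‖ := by
  simpa [two_mul, ContinuousLinearMap.opNorm_flip] using norm_add_le B B.flip

noncomputable def logWeight (y : E) : ℝ := log (phiw √(B y y))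

noncomputable def gradLogWeight (y : E) : E →L[ℝ] ℝ := radialFactor (B y y) • (B + B.flip) y

lemma hasFDerivAt_logWeight {y : E} (hy : 0 < B y y) :
    HasFDerivAt (logWeight B) (gradLogWeight B y) y :=
  (hasDerivAt_log_phiw_sqrt hy).comp_hasFDerivAt (f := fun z => B z z) y
    (hasFDerivAt_apply_self B y)

lemma phiw_sqrt_apply_self_sq_le {x : E} (hx : 0 ≤ B x x) : phiw √(B x x) ^ 2 ≤ ‖B‖ * ‖x‖ ^ 2 :=
  calc phiw √(B x x) ^ 2 ≤ √(B x x) ^ 2 := by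
        gcongr
        · exact mul_nonneg (sqrt_nonneg _) (exp_pos _).le
        · exact phiw_le_self (sqrt_nonneg _)
    _ ≤ ‖B‖ * ‖x‖ ^ 2 := by
        rw [sq_sqrt hx, sq, ← mul_assoc]
        exact (le_abs_self _).trans (B.le_opNorm₂ x x)

variable {B} {s₀ β : ℝ}

lemma apply_self_pos (hs₀ : 0 < s₀) (hB : ∀ y, s₀ * ‖y‖ ^ 2 ≤ B y y) {y : E} (hy : y ≠ 0) :
    0 < B y y :=
  (hB y).trans_lt' (by have := norm_pos_iff.2 hy; positivity)

lemma fderiv_logWeight_eventuallyEq (hs₀ : 0 < s₀) (hB : ∀ y, s₀ * ‖y‖ ^ 2 ≤ B y y) (lam : ℝ)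
    {x : E} (hx : x ≠ 0) :
    fderiv ℝ (fun y => -lam * logWeight B y) =ᶠ[𝓝 x] fun y => -lam • gradLogWeight B y := by
  filter_upwards [isOpen_compl_singleton.mem_nhds hx] with y hy
  exact ((hasFDerivAt_logWeight B (apply_self_pos hs₀ hB hy)).const_mul (-lam)).fderiv

lemma norm_gradLogWeight_le (hs₀ : 0 < s₀) (hB : ∀ y, s₀ * ‖y‖ ^ 2 ≤ B y y) (hβ : ‖B‖ ≤ β)
    {y : E} (hy : y ≠ 0) : ‖gradLogWeight B y‖ ≤ β / s₀ / ‖y‖ := by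
  have hQ := apply_self_pos hs₀ hB hy
  calc ‖gradLogWeight B y‖ ≤ 1 / (2 * B y y) * (2 * β * ‖y‖) := by
        rw [gradLogWeight, norm_smul, Real.norm_eq_abs]
        gcongr
        · exact abs_radialFactor_le hQ
        · exact ((B + B.flip).le_opNorm y).trans
            (by gcongr; exact (norm_add_flip_le B).trans (by gcongr))
    _ ≤ 1 / (2 * (s₀ * ‖y‖ ^ 2)) * (2 * β * ‖y‖) := by
        have : 0 ≤ β := (norm_nonneg B).trans hβ
        gcongr
        exact hB y
    _ = β / s₀ / ‖y‖ := by field_simp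

lemma exists_hasFDerivAt_gradLogWeight (hs₀ : 0 < s₀) (hB : ∀ y, s₀ * ‖y‖ ^ 2 ≤ B y y)
    (hβ : ‖B‖ ≤ β) {y : E} (hy : y ≠ 0) :
    ∃ D : E →L[ℝ] E →L[ℝ] ℝ, HasFDerivAt (gradLogWeight B) D y ∧
      ‖D‖ ≤ (β / s₀ + 2 * β ^ 2 / s₀ ^ 2) / ‖y‖ ^ 2 := by
  have hy0 := norm_pos_iff.2 hy
  have hQ := apply_self_pos hs₀ hB hy
  have hβ0 : 0 ≤ β := (norm_nonneg B).trans hβ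
  obtain ⟨d, hd, hdle⟩ := exists_hasDerivAt_radialFactor hQ
  set L := B + B.flip
  have hf : HasFDerivAt (fun z => radialFactor (B z z)) (d • L y) y :=
    hd.comp_hasFDerivAt (f := fun z => B z z) y (hasFDerivAt_apply_self B y)
  refine ⟨_, hf.fun_smul L.hasFDerivAt, ?_⟩
  have hL : ‖L‖ ≤ 2 * β := (norm_add_flip_le B).trans (by gcongr)
  have hLy : ‖L y‖ ≤ 2 * β * ‖y‖ := (L.le_opNorm y).trans (by gcongr)
  calc ‖radialFactor (B y y) • L + (d • L y).smulRight (L y)‖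
      ≤ |radialFactor (B y y)| * ‖L‖ + |d| * ‖L y‖ * ‖L y‖ := by
        refine (norm_add_le _ _).trans (add_le_add (L.opNorm_smul_le _) ?_)
        rw [ContinuousLinearMap.norm_smulRight_apply, norm_smul, Real.norm_eq_abs]
    _ ≤ 1 / (2 * B y y) * (2 * β) + 1 / (2 * B y y ^ 2) * (2 * β * ‖y‖) * (2 * β * ‖y‖) := by
        gcongr
        exact abs_radialFactor_le hQ
    _ ≤ 1 / (2 * (s₀ * ‖y‖ ^ 2)) * (2 * β)
          + 1 / (2 * (s₀ * ‖y‖ ^ 2) ^ 2) * (2 * β * ‖y‖) * (2 * β * ‖y‖) := by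
        gcongr <;> exact hB y
    _ = (β / s₀ + 2 * β ^ 2 / s₀ ^ 2) / ‖y‖ ^ 2 := by
        field_simp

end BilinearForm

lemma abs_sum_sum_le {ι : Type*} [Fintype ι] {f : ι → ι → ℝ} {b : ℝ} (h : ∀ i j, |f i j| ≤ b) :
    |∑ i, ∑ j, f i j| ≤ Fintype.card ι ^ 2 * b :=
  calc |∑ i, ∑ j, f i j| ≤ ∑ i, ∑ j, |f i j| :=
        (Finset.abs_sum_le_sum_abs _ _).trans (Finset.sum_le_sum fun i _ =>
          Finset.abs_sum_le_sum_abs _ _)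
    _ ≤ ∑ _i : ι, ∑ _j : ι, b := Finset.sum_le_sum fun i _ => Finset.sum_le_sum fun j _ => h i j
    _ = Fintype.card ι ^ 2 * b := by simp [sq, mul_assoc]

section Coordinates

variable {n : ℕ}

lemma abs_pd_mul_pd_le {α ℓ : EuclideanSpace ℝ (Fin n) → ℝ}
    {g : EuclideanSpace ℝ (Fin n) → EuclideanSpace ℝ (Fin n) →L[ℝ] ℝ}
    {D : EuclideanSpace ℝ (Fin n) →L[ℝ] EuclideanSpace ℝ (Fin n) →L[ℝ] ℝ}
    {x : EuclideanSpace ℝ (Fin n)} (hℓ : fderiv ℝ ℓ =ᶠ[𝓝 x] g) (hα : DifferentiableAt ℝ α x)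
    (hg : HasFDerivAt g D x) (j k : Fin n) :
    |pd (fun y => α y * pd ℓ j y) k x| ≤ |α x| * ‖D‖ + ‖g x‖ * ‖fderiv ℝ α x‖ := by
  have heq : (fun y => α y * pd ℓ j y) =ᶠ[𝓝 x] fun y => α y * g y (EuclideanSpace.single j 1) :=
    hℓ.mono fun y hy => by simp only [pd, hy]
  have hder := hα.hasFDerivAt.fun_mul
    (hg.clm_apply (hasFDerivAt_const (EuclideanSpace.single j (1 : ℝ)) x))
  have hunit : ∀ i : Fin n, ‖EuclideanSpace.single i (1 : ℝ)‖ = 1 := by simp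
  rw [pd, heq.fderiv_eq, hder.fderiv]
  simp only [add_apply, smul_apply, ContinuousLinearMap.comp_zero, zero_add,
    ContinuousLinearMap.flip_apply, smul_eq_mul]
  refine (abs_add_le _ _).trans (add_le_add ?_ ?_) <;> rw [abs_mul]
  · gcongr
    simpa [hunit] using D.le_opNorm₂ (EuclideanSpace.single k 1) (EuclideanSpace.single j 1)
  · gcongr
    · simpa [hunit] using (g x).le_opNorm (EuclideanSpace.single j 1)
    · simpa [hunit] using (fderiv ℝ α x).le_opNorm (EuclideanSpace.single k 1)

lemma abs_pd_mul_pd_logWeight_le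
    {B : EuclideanSpace ℝ (Fin n) →L[ℝ] EuclideanSpace ℝ (Fin n) →L[ℝ] ℝ} {s₀ M lam : ℝ}
    (hs₀ : 0 < s₀) (hB : ∀ y, s₀ * ‖y‖ ^ 2 ≤ B y y) (hBM : ‖B‖ ≤ M)
    {α : EuclideanSpace ℝ (Fin n) → ℝ} {x : EuclideanSpace ℝ (Fin n)}
    (hα : DifferentiableAt ℝ α x) (hαM : |α x| ≤ M) (hDα : ‖fderiv ℝ α x‖ ≤ M)
    (hlam : 0 ≤ lam) (hx : x ≠ 0) (hx1 : ‖x‖ ≤ 1) (j k : Fin n) :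
    |pd (fun y => α y * pd (fun y => -lam * logWeight B y) j y) k x|
      ≤ 2 * M * (M / s₀ + 2 * M ^ 2 / s₀ ^ 2) * lam / ‖x‖ ^ 2 := by
  obtain ⟨D, hD, hDle⟩ := exists_hasFDerivAt_gradLogWeight hs₀ hB hBM hx
  have hx0 := norm_pos_iff.2 hx
  have hM0 : 0 ≤ M := (abs_nonneg _).trans hαM
  set κ := M / s₀ + 2 * M ^ 2 / s₀ ^ 2
  have hgrad : ‖gradLogWeight B x‖ ≤ κ / ‖x‖ ^ 2 :=
    calc ‖gradLogWeight B x‖ ≤ M / s₀ / ‖x‖ := norm_gradLogWeight_le hs₀ hB hBM hx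
      _ ≤ κ / ‖x‖ ^ 2 := by
        rw [div_eq_mul_one_div _ ‖x‖, div_eq_mul_one_div κ]
        gcongr
        · exact le_add_of_nonneg_right (by positivity)
        · nlinarith
  calc _ ≤ |α x| * ‖-lam • D‖ + ‖-lam • gradLogWeight B x‖ * ‖fderiv ℝ α x‖ :=
        abs_pd_mul_pd_le (fderiv_logWeight_eventuallyEq hs₀ hB lam hx) hα
          (hD.const_smul (-lam)) j k
    _ ≤ M * (lam * (κ / ‖x‖ ^ 2)) + lam * (κ / ‖x‖ ^ 2) * M := by
        have hnorm : ‖-lam‖ = lam := by rw [norm_neg, Real.norm_of_nonneg hlam]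
        gcongr
        · exact (D.opNorm_smul_le _).trans (by rw [hnorm]; gcongr)
        · rw [norm_smul, hnorm]
          gcongr
    _ = 2 * M * κ * lam / ‖x‖ ^ 2 := by ring

noncomputable def coordBilin (c : Fin n → Fin n → ℝ) :
    EuclideanSpace ℝ (Fin n) →L[ℝ] EuclideanSpace ℝ (Fin n) →L[ℝ] ℝ :=
  ∑ j, ∑ k, c j k • (EuclideanSpace.proj j : EuclideanSpace ℝ (Fin n) →L[ℝ] ℝ).smulRight
    (EuclideanSpace.proj k : EuclideanSpace ℝ (Fin n) →L[ℝ] ℝ)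

lemma coordBilin_apply (c : Fin n → Fin n → ℝ) (y z : EuclideanSpace ℝ (Fin n)) :
    coordBilin c y z = ∑ j, ∑ k, c j k * y j * z k := by
  simp [coordBilin, mul_assoc]

lemma lw_eq (a : Fin n → Fin n → ℝ → EuclideanSpace ℝ (Fin n) → ℝ) (lam t : ℝ) :
    lw a lam t = fun y => -lam * logWeight (coordBilin (fun j k => a j k t 0)) y := by
  funext y
  simp [lw, ww, sigw, logWeight, coordBilin_apply]

lemma ww_eq (a : Fin n → Fin n → ℝ → EuclideanSpace ℝ (Fin n) → ℝ) (x : EuclideanSpace ℝ (Fin n))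
    (t : ℝ) : ww a x t = phiw √(coordBilin (fun j k => a j k t 0) x x) := by
  simp [ww, sigw, coordBilin_apply]

lemma norm_coordBilin_le (c : Fin n → Fin n → ℝ) : ‖coordBilin c‖ ≤ ∑ j, ∑ k, |c j k| := by
  refine ContinuousLinearMap.opNorm_le_bound₂ _ (by positivity) fun y z => ?_
  rw [coordBilin_apply, Real.norm_eq_abs, Finset.sum_mul, Finset.sum_mul]
  refine (Finset.abs_sum_le_sum_abs _ _).trans (Finset.sum_le_sum fun j _ => ?_)
  rw [Finset.sum_mul, Finset.sum_mul]
  refine (Finset.abs_sum_le_sum_abs _ _).trans (Finset.sum_le_sum fun k _ => ?_)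
  rw [abs_mul, abs_mul]
  gcongr
  · simpa using PiLp.norm_apply_le y j
  · simpa using PiLp.norm_apply_le z k

lemma ww_pos {a : Fin n → Fin n → ℝ → EuclideanSpace ℝ (Fin n) → ℝ} {x : EuclideanSpace ℝ (Fin n)}
    {t : ℝ} (hx : 0 < coordBilin (fun j k => a j k t 0) x x) : 0 < ww a x t := by
  rw [ww_eq, phiw]
  exact mul_pos (sqrt_pos.2 hx) (exp_pos _)

lemma ww_sq_le {a : Fin n → Fin n → ℝ → EuclideanSpace ℝ (Fin n) → ℝ}
    {x : EuclideanSpace ℝ (Fin n)} {t N : ℝ} (hx : 0 ≤ coordBilin (fun j k => a j k t 0) x x)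
    (hN : ‖coordBilin fun j k => a j k t 0‖ ≤ N) : ww a x t ^ 2 ≤ N * ‖x‖ ^ 2 := by
  rw [ww_eq]
  exact (phiw_sqrt_apply_self_sq_le _ hx).trans (by gcongr)

lemma abs_Psiw_le {a : Fin n → Fin n → ℝ → EuclideanSpace ℝ (Fin n) → ℝ} {s₀ N lam t : ℝ}
    (hs₀ : 0 < s₀) (hell : ∀ ξ, s₀ * ‖ξ‖ ^ 2 ≤ coordBilin (fun j k => a j k t 0) ξ ξ)
    (hN : ‖coordBilin fun j k => a j k t 0‖ ≤ N) {x : EuclideanSpace ℝ (Fin n)}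
    (hcoef : ∀ j k, DifferentiableAt ℝ (a j k t) x ∧ |a j k t x| ≤ N ∧
      ‖fderiv ℝ (a j k t) x‖ ≤ N)
    (hlam : 0 ≤ lam) (hx : x ≠ 0) (hx1 : ‖x‖ ≤ 1) :
    |Psiw a lam t x| ≤ 4 * n ^ 2 * N * (N / s₀ + 2 * N ^ 2 / s₀ ^ 2) * lam / ‖x‖ ^ 2 := by
  have hsum := abs_sum_sum_le fun j k =>
    abs_pd_mul_pd_logWeight_le hs₀ hell hN (hcoef j k).1 (hcoef j k).2.1 (hcoef j k).2.2 hlam hx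
      hx1 j k
  rw [Psiw, lw_eq, abs_mul, abs_two]
  calc 2 * |_| ≤ 2 * (Fintype.card (Fin n) ^ 2
        * (2 * N * (N / s₀ + 2 * N ^ 2 / s₀ ^ 2) * lam / ‖x‖ ^ 2)) := by gcongr
    _ = _ := by rw [Fintype.card_fin]; ring

end Coordinates

section Slices

variable {E : Type*} [NormedAddCommGroup E] [NormedSpace ℝ E] {f : ℝ → E → ℝ}

lemma hasFDerivAt_slice (hf : Differentiable ℝ fun p : ℝ × E => f p.1 p.2) (t : ℝ) (x : E) :
    HasFDerivAt (f t)
      ((fderiv ℝ (fun p : ℝ × E => f p.1 p.2) (t, x)).comp (ContinuousLinearMap.inr ℝ ℝ E)) x :=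
  (hf (t, x)).hasFDerivAt.comp x (hasFDerivAt_prodMk_right t x)

lemma eventually_bound_slice (hf : ContDiff ℝ 1 fun p : ℝ × E => f p.1 p.2)
    {K : Set (ℝ × E)} (hK : IsCompact K) :
    ∀ᶠ M in atTop, ∀ p ∈ K, |f p.1 p.2| ≤ M ∧ ‖fderiv ℝ (f p.1) p.2‖ ≤ M := by
  set F := fun p : ℝ × E => f p.1 p.2
  have hslice (p : ℝ × E) : ‖fderiv ℝ (f p.1) p.2‖ ≤ ‖fderiv ℝ F p‖ := by
    rw [(hasFDerivAt_slice (hf.differentiable one_ne_zero) p.1 p.2).fderiv]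
    exact (ContinuousLinearMap.opNorm_comp_le _ _).trans
      (mul_le_of_le_one_right (norm_nonneg _) (ContinuousLinearMap.norm_inr_le_one ℝ ℝ E))
  obtain ⟨C, hC⟩ := hK.exists_bound_of_continuousOn
    (hf.continuous.abs.add (hf.continuous_fderiv one_ne_zero).norm).continuousOn
  filter_upwards [eventually_ge_atTop C] with M hM p hp
  have hsum : |F p| + ‖fderiv ℝ F p‖ ≤ M := (le_abs_self _).trans ((hC p hp).trans hM)
  exact ⟨(le_add_of_nonneg_right (norm_nonneg _)).trans hsum,
    (hslice p).trans ((le_add_of_nonneg_left (abs_nonneg _)).trans hsum)⟩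

lemma exists_bound_of_contDiff {ι : Type*} [Finite ι] {f : ι → ℝ → E → ℝ}
    (hf : ∀ i, ContDiff ℝ 1 fun p : ℝ × E => f i p.1 p.2) {K : Set ℝ} {S : Set E}
    (hK : IsCompact K) (hS : IsCompact S) :
    ∃ M, 1 ≤ M ∧ ∀ i, ∀ t ∈ K, ∀ y ∈ S,
      DifferentiableAt ℝ (f i t) y ∧ |f i t y| ≤ M ∧ ‖fderiv ℝ (f i t) y‖ ≤ M := by
  obtain ⟨M, hM, hM1⟩ := ((eventually_all.2 fun i => eventually_bound_slice (hf i)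
    (hK.prod hS)).and (eventually_ge_atTop 1)).exists
  exact ⟨M, hM1, fun i t ht y hy =>
    ⟨(hasFDerivAt_slice ((hf i).differentiable one_ne_zero) t y).differentiableAt,
      hM i (t, y) ⟨ht, hy⟩⟩⟩

end Slices

theorem stmt_8_general
    (n : ℕ) (hn : 1 ≤ n) (T s₀ : ℝ) (hs₀ : 0 < s₀)
    (a : Fin n → Fin n → ℝ → EuclideanSpace ℝ (Fin n) → ℝ)
    (ha_smooth : ∀ j k, ContDiff ℝ 2 fun p : ℝ × EuclideanSpace ℝ (Fin n) => a j k p.1 p.2)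
    (ha_ell : ∀ t ∈ Icc (0:ℝ) T, ∀ x ξ : EuclideanSpace ℝ (Fin n),
      s₀ * ‖ξ‖ ^ 2 ≤ ∑ j, ∑ k, a j k t x * ξ j * ξ k) :
    ∃ r : ℝ, 0 < r ∧ ∃ C : ℝ, 0 < C ∧ ∀ lam : ℝ, 1 ≤ lam → ∀ t ∈ Icc (0:ℝ) T,
      ∀ x : EuclideanSpace ℝ (Fin n), 0 < ‖x‖ → ‖x‖ ≤ r →
        |Psiw a lam t x| ≤ C * lam / (ww a x t) ^ 2 := by
  obtain ⟨M, hM1, hcoef⟩ := exists_bound_of_contDiff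
    (fun jk : Fin n × Fin n => (ha_smooth jk.1 jk.2).of_le (by norm_num))
    isCompact_Icc (isCompact_closedBall (0 : EuclideanSpace ℝ (Fin n)) 1)
  have hn' : (1 : ℝ) ≤ n ^ 2 := one_le_pow₀ (by exact_mod_cast hn)
  set N := n ^ 2 * M
  have hMN : M ≤ N := le_mul_of_one_le_left (by positivity) hn'
  set κ := N / s₀ + 2 * N ^ 2 / s₀ ^ 2
  refine ⟨1, one_pos, 4 * n ^ 2 * N ^ 2 * κ, by positivity, fun lam hlam t ht x hx0 hx1 => ?_⟩
  set B := coordBilin fun j k => a j k t 0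
  have hell (ξ : EuclideanSpace ℝ (Fin n)) : s₀ * ‖ξ‖ ^ 2 ≤ B ξ ξ := by
    simpa [B, coordBilin_apply] using ha_ell t ht 0 ξ
  have hBN : ‖B‖ ≤ N := (norm_coordBilin_le _).trans ((le_abs_self _).trans (by
    simpa using abs_sum_sum_le fun j k => (abs_abs _).trans_le (hcoef (j, k) t ht 0 (by simp)).2.1))
  have hcoef_x (j k : Fin n) : DifferentiableAt ℝ (a j k t) x ∧ |a j k t x| ≤ N ∧
      ‖fderiv ℝ (a j k t) x‖ ≤ N := by
    obtain ⟨hdiff, habs, hderiv⟩ := hcoef (j, k) t ht x (by simpa using hx1)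
    exact ⟨hdiff, habs.trans hMN, hderiv.trans hMN⟩
  have hx : x ≠ 0 := norm_pos_iff.1 hx0
  have hQ := apply_self_pos hs₀ hell hx
  calc |Psiw a lam t x| ≤ 4 * n ^ 2 * N * κ * lam / ‖x‖ ^ 2 :=
        abs_Psiw_le hs₀ hell hBN hcoef_x (by linarith) hx hx1
    _ = 4 * n ^ 2 * N ^ 2 * κ * lam / (N * ‖x‖ ^ 2) := by
        field_simp
    _ ≤ 4 * n ^ 2 * N ^ 2 * κ * lam / ww a x t ^ 2 := by
        have := ww_pos (a := a) hQ
        gcongr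
        exact ww_sq_le hQ.le hBN

theorem stmt_8
    (n : ℕ) (hn : 1 ≤ n) (T s₀ : ℝ) (hT : 0 < T) (hs₀ : 0 < s₀)
    (a : Fin n → Fin n → ℝ → EuclideanSpace ℝ (Fin n) → ℝ)
    (ha_smooth : ∀ j k, ContDiff ℝ 2 fun p : ℝ × EuclideanSpace ℝ (Fin n) => a j k p.1 p.2)
    (ha_symm : ∀ j k t x, a j k t x = a k j t x)
    (ha_ell : ∀ t ∈ Icc (0:ℝ) T, ∀ x ξ : EuclideanSpace ℝ (Fin n),
      s₀ * ‖ξ‖ ^ 2 ≤ ∑ j, ∑ k, a j k t x * ξ j * ξ k) :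
    ∃ r : ℝ, 0 < r ∧ ∃ C : ℝ, 0 < C ∧ ∀ lam : ℝ, 1 ≤ lam → ∀ t ∈ Icc (0:ℝ) T,
      ∀ x : EuclideanSpace ℝ (Fin n), 0 < ‖x‖ → ‖x‖ ≤ r →
        |Psiw a lam t x| ≤ C * lam / (ww a x t) ^ 2 :=
  stmt_8_general n hn T s₀ hs₀ a ha_smooth ha_ell
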